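/- arXiv:2203.06333 — 2 statements merged into one kernel-verified Lean document; each statement's English description precedes it below -/
import Mathlib

section
/- If the transferable-utility game (N, v) is convex, then for any linear ordering of the agents the marginal-contribution vector lies in the core: letting x_i = v({j : j ≤ i}) − v({j : j < i}) for each agent i ∈ N (where ≤ is a fixed linear order on N), the vector x satisfies Σ_{i ∈ N} x_i = v(N) and Σ_{i ∈ C} x_i ≥ v(C) for every coalition C ⊆ N. -/
open Finset

variable {N : Type*} [Fintype N] [DecidableEq N]

/-- The Shapley value of agent `i` in the TU game with characteristic function `v`:
`φ_i(v) = Σ_{C ⊆ N \ {i}} (|C|! (n − |C| − 1)! / n!) (v(C ∪ {i}) − v(C))`. -/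
noncomputable def shapley (v : Finset N → ℝ) (i : N) : ℝ :=
  ∑ C ∈ (Finset.univ.erase i).powerset,
    ((Nat.factorial C.card * Nat.factorial (Fintype.card N - C.card - 1) : ℕ) : ℝ) /
      ((Nat.factorial (Fintype.card N) : ℕ) : ℝ) * (v (insert i C) - v C)

/-- In a convex game, for any linear ordering of the agents the
marginal-contribution vector `x_i = v({j : j ≤ i}) − v({j : j < i})` lies in
the core: it is efficient and every coalition receives at least its value. -/
theorem marginal_vector_in_core_of_convex [LinearOrder N] (v : Finset N → ℝ)
    (hv0 : v ∅ = 0)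
    (hconvex : ∀ C D : Finset N, v C + v D ≤ v (C ∪ D) + v (C ∩ D))
    (x : N → ℝ)
    (hx : ∀ i : N, x i = v (Finset.univ.filter fun j => j ≤ i) -
      v (Finset.univ.filter fun j => j < i)) :
    (∑ i : N, x i = v Finset.univ) ∧ ∀ C : Finset N, v C ≤ ∑ i ∈ C, x i := by
  have key : ∀ C : Finset N, v C ≤ ∑ i ∈ C, x i := by
    intro C
    induction C using Finset.strongInduction with
    | _ C ih =>
      rcases C.eq_empty_or_nonempty with rfl | hC
      · simp [hv0]
      · set i := C.max' hC with hi
        have hiC : i ∈ C := C.max'_mem hC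
        have hle : ∀ j ∈ C, j ≤ i := fun j hj => C.le_max' j hj
        have hU : C ∪ Finset.univ.filter (fun j => j < i) =
            Finset.univ.filter (fun j => j ≤ i) := by
          ext j
          simp only [Finset.mem_union, Finset.mem_filter, Finset.mem_univ, true_and]
          constructor
          · rintro (h | h)
            · exact hle j h
            · exact h.le
          · intro h
            rcases eq_or_lt_of_le h with rfl | h
            · exact Or.inl hiC
            · exact Or.inr h
        have hI : C ∩ Finset.univ.filter (fun j => j < i) = C.erase i := by
          ext j
          simp only [Finset.mem_inter, Finset.mem_filter, Finset.mem_univ, true_and,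
            Finset.mem_erase]
          constructor
          · rintro ⟨hj, hlt⟩; exact ⟨ne_of_lt hlt, hj⟩
          · rintro ⟨hne, hj⟩; exact ⟨hj, lt_of_le_of_ne (hle j hj) hne⟩
        have hconv := hconvex C (Finset.univ.filter (fun j => j < i))
        rw [hU, hI] at hconv
        have hih := ih (C.erase i) (Finset.erase_ssubset hiC)
        have hsum : ∑ j ∈ C, x j = x i + ∑ j ∈ C.erase i, x j := by
          rw [← Finset.sum_erase_add C x hiC]; ring
        rw [hsum, hx i]
        linarith
  refine ⟨?_, key⟩
  have eqlem : ∀ C : Finset N, (∀ a ∈ C, ∀ b, b ≤ a → b ∈ C) → ∑ i ∈ C, x i = v C := by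
    intro C
    induction C using Finset.strongInduction with
    | _ C ih =>
      intro hlow
      rcases C.eq_empty_or_nonempty with rfl | hC
      · simp [hv0]
      · set i := C.max' hC with hi
        have hiC : i ∈ C := C.max'_mem hC
        have hle : ∀ j ∈ C, j ≤ i := fun j hj => C.le_max' j hj
        have h1 : Finset.univ.filter (fun j => j ≤ i) = C := by
          ext j
          simp only [Finset.mem_filter, Finset.mem_univ, true_and]
          exact ⟨fun h => hlow i hiC j h, fun h => hle j h⟩
        have h2 : Finset.univ.filter (fun j => j < i) = C.erase i := by
          ext j
          simp only [Finset.mem_filter, Finset.mem_univ, true_and, Finset.mem_erase]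
          exact ⟨fun h => ⟨ne_of_lt h, hlow i hiC j h.le⟩,
            fun h => lt_of_le_of_ne (hle j h.2) h.1⟩
        have hlow' : ∀ a ∈ C.erase i, ∀ b, b ≤ a → b ∈ C.erase i := by
          intro a ha b hb
          rw [Finset.mem_erase] at ha ⊢
          refine ⟨?_, hlow a ha.2 b hb⟩
          rintro rfl
          exact ha.1 (le_antisymm (hle a ha.2) hb)
        have hih := ih (C.erase i) (Finset.erase_ssubset hiC) hlow'
        have hsum : ∑ j ∈ C, x j = x i + ∑ j ∈ C.erase i, x j := by
          rw [← Finset.sum_erase_add C x hiC]; ring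
        rw [hsum, hx i, h1, h2, hih]
        ring
  exact eqlem Finset.univ (fun a _ b _ => Finset.mem_univ b)
end

section
/- If the transferable-utility game (N, v) is a convex game, then its core is nonempty: there exists an allocation x : N → ℝ with Σ_{i ∈ N} x_i = v(N) and Σ_{i ∈ C} x_i ≥ v(C) for every coalition C ⊆ N. -/
open Finset

variable {N : Type*} [Fintype N] [DecidableEq N]

/-- A convex TU game has a nonempty core: there exists an allocation that is
efficient and gives every coalition at least its value. -/
theorem core_nonempty_of_convex (v : Finset N → ℝ) (hv0 : v ∅ = 0)
    (hconvex : ∀ C D : Finset N, v C + v D ≤ v (C ∪ D) + v (C ∩ D)) :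
    ∃ x : N → ℝ, (∑ i : N, x i = v Finset.univ) ∧
      ∀ C : Finset N, v C ≤ ∑ i ∈ C, x i := by
  classical
  set n := Fintype.card N with hn
  let e : N ≃ Fin n := Fintype.equivFin N
  -- the set of the first k agents
  let S : ℕ → Finset N := fun k => Finset.univ.filter (fun j => (e j : ℕ) < k)
  have hS0 : S 0 = ∅ := by simp [S]
  have hSn : S n = Finset.univ := by
    ext j; simp [S, (e j).isLt]
  have hmemS : ∀ (j : N) (k : ℕ), j ∈ S k ↔ (e j : ℕ) < k := by
    intro j k; simp [S]
  have hstep : ∀ k (hk : k < n), S (k + 1) = insert (e.symm ⟨k, hk⟩) (S k) := by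
    intro k hk
    ext j
    simp only [hmemS, Finset.mem_insert, Nat.lt_succ_iff_lt_or_eq]
    have hiff : j = e.symm ⟨k, hk⟩ ↔ (e j : ℕ) = k := by
      rw [Equiv.eq_symm_apply, Fin.ext_iff]
    rw [hiff]
    tauto
  -- the marginal allocation
  set x : N → ℝ := fun i => v (S ((e i : ℕ) + 1)) - v (S (e i : ℕ)) with hx
  refine ⟨x, ?_, ?_⟩
  · -- efficiency
    have h1 : ∑ i : N, x i = ∑ m : Fin n, x (e.symm m) :=
      (Equiv.sum_comp e.symm x).symm
    have h2 : ∀ m : Fin n, x (e.symm m) = v (S ((m : ℕ) + 1)) - v (S (m : ℕ)) := by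
      intro m; simp [hx]
    rw [h1]
    simp_rw [h2]
    rw [Fin.sum_univ_eq_sum_range (fun k => v (S (k + 1)) - v (S k)) n,
      Finset.sum_range_sub (fun k => v (S k)) n, hS0, hSn, hv0, sub_zero]
  · -- core inequalities
    intro C
    have key : ∀ k, v (C ∩ S k) ≤ ∑ i ∈ C ∩ S k, x i := by
      intro k
      induction k with
      | zero => simp [hS0, hv0]
      | succ k ih =>
        by_cases hk : k < n
        · set i := e.symm ⟨k, hk⟩ with hi
          have hei : (e i : ℕ) = k := by simp [hi]
          have hiS : i ∉ S k := by
            rw [hmemS, hei]; exact lt_irrefl k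
          rw [hstep k hk]
          by_cases hiC : i ∈ C
          · have heq : C ∩ insert i (S k) = insert i (C ∩ S k) := by
              rw [Finset.inter_comm, Finset.insert_inter_of_mem hiC,
                Finset.inter_comm]
            rw [heq]
            have hnot : i ∉ C ∩ S k := fun h => hiS (Finset.mem_inter.1 h).2
            rw [Finset.sum_insert hnot]
            have hcx := hconvex (insert i (C ∩ S k)) (S k)
            have hun : insert i (C ∩ S k) ∪ S k = insert i (S k) := by
              rw [Finset.insert_union]
              congr 1
              exact Finset.union_eq_right.2 (Finset.inter_subset_right)
            have hin : insert i (C ∩ S k) ∩ S k = C ∩ S k := by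
              rw [Finset.insert_inter_of_notMem hiS]
              exact Finset.inter_eq_left.2 (Finset.inter_subset_right)
            rw [hun, hin] at hcx
            have hxi : x i = v (S (k + 1)) - v (S k) := by
              rw [hx]; simp [hei]
            rw [hstep k hk] at hxi
            have : v (insert i (C ∩ S k)) ≤ x i + v (C ∩ S k) := by
              rw [hxi]; linarith
            linarith
          · have heq : C ∩ insert i (S k) = C ∩ S k := by
              rw [Finset.inter_comm, Finset.insert_inter_of_notMem hiC,
                Finset.inter_comm]
            rw [heq]; exact ih
        · have : S (k + 1) = S k := by
            ext j
            simp only [hmemS]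
            have := (e j).isLt
            omega
          rw [this]; exact ih
    have := key n
    rwa [hSn, Finset.inter_univ C] at this
end
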